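/- For fixed n, x with 0 ≤ x < n, and p ∈ (0,1) with 0 < P(N ≤ x) < 1 for N ~ Binomial(n,p), the derivative of the binomial CDF F(p) = Σ_{k=0}^x C(n,k)p^k(1-p)^{n-k} satisfies dF/dp ≤ -P(N ≤ x)(1-P(N ≤ x))/(p(1-p)) < 0. -/

import Mathlib

/-! Differentiating `p ^ k * (1 - p) ^ (n - k)` multiplies it by `(k - n p) / (p (1 - p))`, so
`p (1 - p) F'(p) = E[(N - n p); N ≤ x] = Cov(N, 1{N ≤ x}) = P (1 - P) (E[N | N ≤ x] - E[N | N > x])`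
with `P = P(N ≤ x)`. The two conditional means are at most `x` and at least `x + 1`. -/

/-- The probability mass function of a Binomial(n, p) random variable at k. -/
def binomPMF (n : ℕ) (p : ℝ) (k : ℕ) : ℝ :=
  (n.choose k : ℝ) * p ^ k * (1 - p) ^ (n - k)

/-- The CDF of a Binomial(n, p) random variable evaluated at x. -/
def binomCDF (n x : ℕ) (p : ℝ) : ℝ :=
  ∑ k ∈ Finset.range (x + 1), (n.choose k : ℝ) * p ^ k * (1 - p) ^ (n - k)

open Finset

lemma natCast_mul_pow_sub_one_mul {R : Type*} [Semiring R] (m : ℕ) (a : R) :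
    (m : R) * a ^ (m - 1) * a = m * a ^ m := by
  cases m with
  | zero => simp
  | succ m => simp [pow_succ, mul_assoc]

lemma binomPMF_eq_eval_bernsteinPolynomial (n : ℕ) (p : ℝ) (k : ℕ) :
    binomPMF n p k = (bernsteinPolynomial ℝ n k).eval p := by
  simp [binomPMF, bernsteinPolynomial]

lemma binomPMF_nonneg (n : ℕ) {p : ℝ} (hp0 : 0 ≤ p) (hp1 : p ≤ 1) (k : ℕ) :
    0 ≤ binomPMF n p k := by
  have : 0 ≤ 1 - p := by linarith
  unfold binomPMF
  positivity

lemma sum_binomPMF (n : ℕ) (p : ℝ) : ∑ k ∈ range (n + 1), binomPMF n p k = 1 := by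
  simpa [binomPMF_eq_eval_bernsteinPolynomial, Polynomial.eval_finsetSum] using
    congrArg (Polynomial.eval p) (bernsteinPolynomial.sum ℝ n)

lemma sum_mul_binomPMF (n : ℕ) (p : ℝ) :
    ∑ k ∈ range (n + 1), (k : ℝ) * binomPMF n p k = n * p := by
  simpa [binomPMF_eq_eval_bernsteinPolynomial, Polynomial.eval_finsetSum] using
    congrArg (Polynomial.eval p) (bernsteinPolynomial.sum_smul ℝ n)

lemma hasDerivAt_binomPMF {n k : ℕ} (hk : k ≤ n) {p : ℝ} (hp0 : p ≠ 0) (hp1 : p ≠ 1) :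
    HasDerivAt (fun q => binomPMF n q k) ((k - n * p) * binomPMF n p k / (p * (1 - p))) p := by
  have hq : HasDerivAt (fun q : ℝ => 1 - q) (-1) p := by
    simpa using (hasDerivAt_id p).const_sub 1
  refine (((hasDerivAt_pow k p).const_mul (n.choose k : ℝ)).mul
    ((hasDerivAt_pow (n - k) (1 - p)).comp p hq)).congr_deriv ?_
  have h1p : 1 - p ≠ 0 := sub_ne_zero.mpr (Ne.symm hp1)
  have hpow := natCast_mul_pow_sub_one_mul k p
  have hpow' := natCast_mul_pow_sub_one_mul (n - k) (1 - p)
  rw [Nat.cast_sub hk] at hpow' ⊢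
  rw [Function.comp_apply, eq_div_iff (mul_ne_zero hp0 h1p), binomPMF]
  linear_combination (n.choose k : ℝ) * (1 - p) ^ (n - k) * (1 - p) * hpow -
    (n.choose k : ℝ) * p ^ k * p * hpow'

lemma hasDerivAt_binomCDF {n x : ℕ} (hx : x ≤ n) {p : ℝ} (hp0 : p ≠ 0) (hp1 : p ≠ 1) :
    HasDerivAt (binomCDF n x)
      ((∑ k ∈ range (x + 1), ((k : ℝ) - n * p) * binomPMF n p k) / (p * (1 - p))) p := by
  rw [sum_div]
  exact HasDerivAt.fun_sum fun k hk =>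
    hasDerivAt_binomPMF ((Nat.lt_succ_iff.mp (mem_range.mp hk)).trans hx) hp0 hp1

lemma sum_range_sub_mean_mul_le {w : ℕ → ℝ} {N x : ℕ} (hw : ∀ k, 0 ≤ w k) (hx : x ≤ N)
    (htot : ∑ k ∈ range (N + 1), w k = 1) :
    ∑ k ∈ range (x + 1), ((k : ℝ) - ∑ j ∈ range (N + 1), j * w j) * w k ≤
      -((∑ k ∈ range (x + 1), w k) * (1 - ∑ k ∈ range (x + 1), w k)) := by
  set P := ∑ k ∈ range (x + 1), w k
  have hsplit (f : ℕ → ℝ) :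
      ∑ k ∈ range (x + 1), f k + ∑ k ∈ Ico (x + 1) (N + 1), f k = ∑ k ∈ range (N + 1), f k :=
    sum_range_add_sum_Ico f (by omega)
  have hP : 0 ≤ P := sum_nonneg fun k _ => hw k
  have hcompl : 1 - P = ∑ k ∈ Ico (x + 1) (N + 1), w k := by
    rw [← htot, ← hsplit, add_sub_cancel_left]
  have hQ : 0 ≤ 1 - P := hcompl ▸ sum_nonneg fun k _ => hw k
  have hlow : ∑ k ∈ range (x + 1), (k : ℝ) * w k ≤ x * P := by
    rw [mul_sum]
    gcongr with k hk
    · exact hw k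
    · exact_mod_cast Nat.lt_succ_iff.mp (mem_range.mp hk)
  have hupp : (x + 1) * (1 - P) ≤ ∑ k ∈ Ico (x + 1) (N + 1), (k : ℝ) * w k := by
    rw [hcompl, mul_sum]
    gcongr with k hk
    · exact hw k
    · exact_mod_cast (mem_Ico.mp hk).1
  calc ∑ k ∈ range (x + 1), ((k : ℝ) - ∑ j ∈ range (N + 1), j * w j) * w k
      = (∑ k ∈ range (x + 1), (k : ℝ) * w k) * (1 - P) -
          (∑ k ∈ Ico (x + 1) (N + 1), (k : ℝ) * w k) * P := by
        rw [← hsplit]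
        simp only [sub_mul, sum_sub_distrib, ← mul_sum]
        ring
    _ ≤ x * P * (1 - P) - (x + 1) * (1 - P) * P := by gcongr
    _ = -(P * (1 - P)) := by ring

theorem stmt_17 (n x : ℕ) (p : ℝ) (hp0 : 0 < p) (hp1 : p < 1) (hx : x < n)
    (Ple : ℝ) (hPle : Ple = ∑ k ∈ Finset.range (x + 1), binomPMF n p k)
    (hPle0 : 0 < Ple) (hPle1 : Ple < 1) :
    deriv (fun q : ℝ => binomCDF n x q) p ≤ -(Ple * (1 - Ple)) / (p * (1 - p)) ∧
    -(Ple * (1 - Ple)) / (p * (1 - p)) < 0 := by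
  have hvar : 0 < p * (1 - p) := mul_pos hp0 (sub_pos.mpr hp1)
  have hcov := sum_range_sub_mean_mul_le (binomPMF_nonneg n hp0.le hp1.le) hx.le (sum_binomPMF n p)
  rw [sum_mul_binomPMF, ← hPle] at hcov
  refine ⟨?_, div_neg_of_neg_of_pos (neg_neg_of_pos (mul_pos hPle0 (sub_pos.mpr hPle1))) hvar⟩
  rw [(hasDerivAt_binomCDF hx.le hp0.ne' hp1.ne).deriv]
  exact div_le_div_of_nonneg_right hcov hvar.le
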